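/- arXiv:2404.19314 — 3 statements merged into one kernel-verified Lean document; each statement's English description precedes it below -/
import Mathlib

section
/- Let G=(V,A) be a directed graph with nonnegative capacities b, source s and sink t. For a set P of s-t paths, define obj_1(P) as the minimum over all single-link failures ā ∈ A of the maximum s-t flow in the subgraph induced by the links of P with link ā removed, and for a set P' of pairwise link-disjoint s-t paths define obj_{a,b}(P') = |P'| · min_{p∈P'} min_{a∈p} b(a). Then for any set P' of at most k pairwise link-disjoint s-t paths with |P'| ≥ 2, there exists a set P of exactly k s-t paths (allowing repetitions) such that obj_1(P) ≥ (|P'|−1) · min_{p∈P'} min_{a∈p} b(a). -/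
open Finset

variable {V : Type}

/-- The arcs (consecutive vertex pairs) of a path given as a vertex list. -/
def arcs (p : List V) : List (V × V) := p.zip p.tail

/-- `p` is a simple directed `s`-`t` path using only arcs of `E`. -/
def IsPath [DecidableEq V] (E : Finset (V × V)) (s t : V) (p : List V) : Prop :=
  p.head? = some s ∧ p.getLast? = some t ∧ p.Nodup ∧ ∀ a ∈ arcs p, a ∈ E

/-- The bottleneck (minimum capacity) of a path. -/
noncomputable def mincap (b : V × V → ℝ) (p : List V) : ℝ :=
  sInf (b '' {a | a ∈ arcs p})

/-- `f` is a feasible `s`-`t` flow on the arc set `E` with capacities `b`. -/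
structure IsFlow [Fintype V] (E : Finset (V × V)) (b : V × V → ℝ) (s t : V)
    (f : V × V → ℝ) : Prop where
  nonneg : ∀ a, 0 ≤ f a
  support : ∀ a, a ∉ E → f a = 0
  cap : ∀ a ∈ E, f a ≤ b a
  conserve : ∀ v, v ≠ s → v ≠ t → (∑ u, f (u, v)) = (∑ u, f (v, u))

/-- The value of a flow: net outflow at the source `s`. -/
noncomputable def flowValue [Fintype V] (s : V) (f : V × V → ℝ) : ℝ :=
  (∑ u, f (s, u)) - (∑ u, f (u, s))

/-- The maximum `s`-`t` flow value on arc set `E` with capacities `b`. -/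
noncomputable def maxFlow [Fintype V] (E : Finset (V × V)) (b : V × V → ℝ) (s t : V) : ℝ :=
  sSup {x | ∃ f, IsFlow E b s t f ∧ flowValue s f = x}

/-- The arcs used by a (finite) set of paths. -/
def inducedArcs [DecidableEq V] (P : Finset (List V)) : Finset (V × V) :=
  P.biUnion fun p => (arcs p).toFinset

/-- The arcs used by a family of `k` paths (repetitions allowed). -/
def inducedArcsFam [DecidableEq V] {k : ℕ} (P : Fin k → List V) : Finset (V × V) :=
  Finset.univ.biUnion fun i => (arcs (P i)).toFinset

/-- The paths in `P` are pairwise arc-disjoint. -/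
def ArcDisjoint (P : Finset (List V)) : Prop :=
  ∀ p ∈ P, ∀ q ∈ P, p ≠ q → ∀ a, a ∈ arcs p → a ∉ arcs q

/-- Worst residual max-flow: minimum over single-arc failures `a ∈ Fail` of the
max-flow on `E` with `a` removed. -/
noncomputable def worstFlow [Fintype V] [DecidableEq V] (Fail E : Finset (V × V))
    (b : V × V → ℝ) (s t : V) : ℝ :=
  sInf {x | ∃ a ∈ Fail, maxFlow (E.erase a) b s t = x}

/-- The arc set `S` contains a directed cycle. -/
def HasCycle [DecidableEq V] (S : Finset (V × V)) : Prop :=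
  ∃ p : List V, 2 ≤ p.length ∧ p.head? = p.getLast? ∧ (p.drop 1).Nodup ∧
    ∀ a ∈ arcs p, a ∈ S

lemma map_fst_arcs : ∀ p : List V, (arcs p).map Prod.fst = p.dropLast
  | [] => rfl
  | [_] => rfl
  | x :: y :: l => by
    have h : arcs (x :: y :: l) = (x, y) :: arcs (y :: l) := rfl
    rw [h, List.map_cons, map_fst_arcs (y :: l), List.dropLast_cons₂]

lemma map_snd_arcs (p : List V) : (arcs p).map Prod.snd = p.tail :=
  List.map_snd_zip (by cases p <;> simp)

lemma mem_out_iff (p : List V) (v : V) : (∃ u, (v, u) ∈ arcs p) ↔ v ∈ p.dropLast := by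
  rw [← map_fst_arcs, List.mem_map]
  constructor
  · rintro ⟨u, hu⟩; exact ⟨(v, u), hu, rfl⟩
  · rintro ⟨⟨a, u⟩, ha, rfl⟩; exact ⟨u, ha⟩

lemma mem_in_iff (p : List V) (v : V) : (∃ u, (u, v) ∈ arcs p) ↔ v ∈ p.tail := by
  rw [← map_snd_arcs, List.mem_map]
  constructor
  · rintro ⟨u, hu⟩; exact ⟨(u, v), hu, rfl⟩
  · rintro ⟨⟨u, a⟩, ha, rfl⟩; exact ⟨u, ha⟩

lemma out_unique {p : List V} (hp : p.Nodup) {v u u' : V}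
    (h : (v, u) ∈ arcs p) (h' : (v, u') ∈ arcs p) : u = u' := by
  have hm : ((arcs p).map Prod.fst).Nodup := by
    rw [map_fst_arcs]; exact hp.sublist (List.dropLast_sublist p)
  have := List.inj_on_of_nodup_map hm h h' rfl
  exact congrArg Prod.snd this

lemma in_unique {p : List V} (hp : p.Nodup) {v u u' : V}
    (h : (u, v) ∈ arcs p) (h' : (u', v) ∈ arcs p) : u = u' := by
  have hm : ((arcs p).map Prod.snd).Nodup := by
    rw [map_snd_arcs]; exact hp.sublist (List.tail_sublist p)
  have := List.inj_on_of_nodup_map hm h h' rfl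
  exact congrArg Prod.fst this

lemma sum_out [Fintype V] [DecidableEq V] (c : ℝ) {p : List V} (hp : p.Nodup) (v : V) :
    (∑ u, if (v, u) ∈ arcs p then c else 0) = if v ∈ p.dropLast then c else 0 := by
  by_cases h : v ∈ p.dropLast
  · obtain ⟨u₀, hu₀⟩ := (mem_out_iff p v).mpr h
    rw [if_pos h, Finset.sum_eq_single u₀]
    · rw [if_pos hu₀]
    · intro u _ hne
      rw [if_neg]; intro hc; exact hne (out_unique hp hc hu₀)
    · intro hc; exact absurd (Finset.mem_univ u₀) hc
  · rw [if_neg h, Finset.sum_eq_zero]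
    intro u _
    rw [if_neg]; intro hc; exact h ((mem_out_iff p v).mp ⟨u, hc⟩)

lemma sum_in [Fintype V] [DecidableEq V] (c : ℝ) {p : List V} (hp : p.Nodup) (v : V) :
    (∑ u, if (u, v) ∈ arcs p then c else 0) = if v ∈ p.tail then c else 0 := by
  by_cases h : v ∈ p.tail
  · obtain ⟨u₀, hu₀⟩ := (mem_in_iff p v).mpr h
    rw [if_pos h, Finset.sum_eq_single u₀]
    · rw [if_pos hu₀]
    · intro u _ hne
      rw [if_neg]; intro hc; exact hne (in_unique hp hc hu₀)
    · intro hc; exact absurd (Finset.mem_univ u₀) hc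
  · rw [if_neg h, Finset.sum_eq_zero]
    intro u _
    rw [if_neg]; intro hc; exact h ((mem_in_iff p v).mp ⟨u, hc⟩)

lemma path_facts [DecidableEq V] {E : Finset (V × V)} {s t : V} {p : List V} (hst : s ≠ t)
    (hp : IsPath E s t p) :
    p ≠ [] ∧ p = s :: p.tail ∧ s ∉ p.tail ∧ s ∈ p.dropLast ∧
      (∀ v, v ≠ s → v ≠ t → (v ∈ p.dropLast ↔ v ∈ p.tail)) := by
  obtain ⟨h1, h2, h3, _⟩ := hp
  have hne : p ≠ [] := by rintro rfl; simp at h1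
  have hhead : p.head hne = s := by rwa [List.head?_eq_head hne, Option.some_inj] at h1
  have hlast : p.getLast hne = t := by
    rwa [List.getLast?_eq_getLast hne, Option.some_inj] at h2
  have hcons : p = s :: p.tail := by rw [← hhead]; exact (List.cons_head_tail hne).symm
  have hsnt : s ∉ p.tail := by
    intro hs
    have := h3
    rw [hcons] at this
    exact (List.nodup_cons.mp this).1 hs
  have htne : p.tail ≠ [] := by
    intro h
    have hps : p = [s] := by rw [hcons, h]
    rw [hps] at h2
    simp at h2
    exact hst h2
  have hsdl : s ∈ p.dropLast := by
    rw [hcons, List.dropLast_cons_of_ne_nil htne]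
    exact List.mem_cons_self
  refine ⟨hne, hcons, hsnt, hsdl, fun v hvs hvt => ?_⟩
  constructor
  · intro hv
    have : v ∈ p := List.mem_of_mem_dropLast hv
    rw [hcons] at this
    rcases List.mem_cons.mp this with h | h
    · exact absurd h hvs
    · exact h
  · intro hv
    have hvp : v ∈ p := List.mem_of_mem_tail hv
    rw [← List.dropLast_append_getLast hne] at hvp
    rcases List.mem_append.mp hvp with h | h
    · exact h
    · rw [hlast] at h; simp at h; exact absurd h hvt

lemma arcs_nonempty [DecidableEq V] {E : Finset (V × V)} {s t : V} {p : List V} (hst : s ≠ t)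
    (hp : IsPath E s t p) : ∃ a, a ∈ arcs p := by
  obtain ⟨_, _, _, hs, _⟩ := path_facts hst hp
  obtain ⟨u, hu⟩ := (mem_out_iff p s).mpr hs
  exact ⟨_, hu⟩

lemma flow_exists [Fintype V] [DecidableEq V] {A : Finset (V × V)} {b : V × V → ℝ}
    (hb : ∀ a, 0 ≤ b a) {s t : V} (hst : s ≠ t)
    (S : Finset (List V)) (hS : ∀ p ∈ S, IsPath A s t p) (hdisj : ArcDisjoint S)
    (E : Finset (V × V)) (hE : ∀ p ∈ S, ∀ a ∈ arcs p, a ∈ E)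
    (abar : V × V) (habar : ∀ p ∈ S, abar ∉ arcs p)
    (c : ℝ) (hc0 : 0 ≤ c) (hcle : ∀ p ∈ S, ∀ a ∈ arcs p, c ≤ b a) :
    ∃ f, IsFlow (E.erase abar) b s t f ∧ flowValue s f = S.card * c := by
  set f : V × V → ℝ := fun e => ∑ p ∈ S, if e ∈ arcs p then c else 0 with hf
  refine ⟨f, ⟨?_, ?_, ?_, ?_⟩, ?_⟩
  · intro a
    exact Finset.sum_nonneg fun p _ => by positivity
  · intro a ha
    refine Finset.sum_eq_zero fun p hp => ?_
    rw [if_neg]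
    intro hc
    exact ha (Finset.mem_erase.mpr ⟨fun h => habar p hp (h ▸ hc), hE p hp a hc⟩)
  · intro a _
    by_cases h : ∃ p ∈ S, a ∈ arcs p
    · obtain ⟨p₀, hp₀, hap₀⟩ := h
      have : f a = c := by
        simp only [hf]
        rw [Finset.sum_eq_single_of_mem p₀ hp₀]
        · rw [if_pos hap₀]
        · intro q hq hne
          rw [if_neg]
          exact hdisj p₀ hp₀ q hq hne.symm a hap₀
      rw [this]
      exact hcle p₀ hp₀ a hap₀
    · have : f a = 0 := Finset.sum_eq_zero fun p hp => by
        rw [if_neg fun hc => h ⟨p, hp, hc⟩]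
      rw [this]; exact hb a
  · intro v hvs hvt
    have h1 : (∑ u, f (u, v)) = ∑ p ∈ S, if v ∈ p.tail then c else 0 := by
      simp only [hf]; rw [Finset.sum_comm]
      exact Finset.sum_congr rfl fun p hp => sum_in c (hS p hp).2.2.1 v
    have h2 : (∑ u, f (v, u)) = ∑ p ∈ S, if v ∈ p.dropLast then c else 0 := by
      simp only [hf]; rw [Finset.sum_comm]
      exact Finset.sum_congr rfl fun p hp => sum_out c (hS p hp).2.2.1 v
    rw [h1, h2]
    refine Finset.sum_congr rfl fun p hp => ?_
    obtain ⟨_, _, _, _, hiff⟩ := path_facts hst (hS p hp)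
    exact if_congr (hiff v hvs hvt).symm rfl rfl
  · have h1 : (∑ u, f (s, u)) = ∑ p ∈ S, if s ∈ p.dropLast then c else 0 := by
      simp only [hf]; rw [Finset.sum_comm]
      exact Finset.sum_congr rfl fun p hp => sum_out c (hS p hp).2.2.1 s
    have h2 : (∑ u, f (u, s)) = ∑ p ∈ S, if s ∈ p.tail then c else 0 := by
      simp only [hf]; rw [Finset.sum_comm]
      exact Finset.sum_congr rfl fun p hp => sum_in c (hS p hp).2.2.1 s
    rw [flowValue, h1, h2]
    have e1 : ∑ p ∈ S, (if s ∈ p.dropLast then c else 0) = S.card * c := by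
      rw [Finset.sum_congr rfl fun p hp => if_pos (path_facts hst (hS p hp)).2.2.2.1]
      rw [Finset.sum_const, nsmul_eq_mul]
    have e2 : ∑ p ∈ S, (if s ∈ p.tail then c else 0) = 0 := by
      rw [Finset.sum_congr rfl fun p hp => if_neg (path_facts hst (hS p hp)).2.2.1]
      simp
    rw [e1, e2, sub_zero]

lemma flowVal_le [Fintype V] (E : Finset (V × V)) (b : V × V → ℝ) (hb : ∀ a, 0 ≤ b a)
    (s t : V) : ∀ x ∈ {x | ∃ f, IsFlow E b s t f ∧ flowValue s f = x}, x ≤ ∑ u, b (s, u) := by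
  rintro x ⟨f, hf, rfl⟩
  have h1 : (∑ u, f (s, u)) ≤ ∑ u, b (s, u) := Finset.sum_le_sum fun u _ => by
    by_cases h : (s, u) ∈ E
    · exact hf.cap _ h
    · rw [hf.support _ h]; exact hb _
  have h2 : 0 ≤ ∑ u, f (u, s) := Finset.sum_nonneg fun u _ => hf.nonneg _
  calc flowValue s f ≤ ∑ u, f (s, u) := by rw [flowValue]; linarith
  _ ≤ _ := h1

/-- from any set `P'` of at most `k` pairwise arc-disjoint `s`-`t`
paths with `|P'| ≥ 2`, one can build `k` paths (repetitions allowed) whose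
worst residual max-flow over all single-link failures is at least
`(|P'| - 1) · min_{p ∈ P'} mincap p`. -/
theorem stmt0 [Fintype V] [DecidableEq V] (A : Finset (V × V)) (b : V × V → ℝ)
    (hb : ∀ a, 0 ≤ b a) (s t : V) (hst : s ≠ t) (k : ℕ)
    (P' : Finset (List V)) (hP' : ∀ p ∈ P', IsPath A s t p)
    (hdisj : ArcDisjoint P') (hcard : P'.card ≤ k) (h2 : 2 ≤ P'.card) :
    ∃ P : Fin k → List V, (∀ i, IsPath A s t (P i)) ∧
      ((P'.card : ℝ) - 1) * sInf (mincap b '' ↑P') ≤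
        worstFlow A (inducedArcsFam P) b s t := by
  have hPne : P'.Nonempty := Finset.card_pos.mp (by omega)
  have hlne : P'.toList ≠ [] := by
    rw [← Finset.length_toList] at h2
    intro h; rw [h] at h2; simp at h2
  set l := P'.toList with hl
  set p₀ := l.head hlne with hp₀
  set P : Fin k → List V := fun i => if h : (i : ℕ) < l.length then l.get ⟨i, h⟩ else p₀ with hPdef
  have hmemP : ∀ i, P i ∈ P' := by
    intro i
    show (if h : (i : ℕ) < l.length then l.get ⟨i, h⟩ else p₀) ∈ P'
    split
    · rw [← Finset.mem_toList]; exact List.get_mem l _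
    · rw [← Finset.mem_toList]; exact List.head_mem hlne
  have hcover : ∀ p ∈ P', ∀ a ∈ arcs p, a ∈ inducedArcsFam P := by
    intro p hp a ha
    have hpl : p ∈ l := Finset.mem_toList.mpr hp
    obtain ⟨⟨j, hj⟩, hget⟩ := List.get_of_mem hpl
    have hjk : j < k := lt_of_lt_of_le (by rwa [hl, Finset.length_toList] at hj) hcard
    refine Finset.mem_biUnion.mpr ⟨⟨j, hjk⟩, Finset.mem_univ _, ?_⟩
    have hPj : P ⟨j, hjk⟩ = p := by
      show (if h : j < l.length then l.get ⟨j, h⟩ else p₀) = p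
      rw [dif_pos hj]; exact hget
    rw [List.mem_toFinset, hPj]; exact ha
  set c := sInf (mincap b '' ↑P') with hc
  have hbdd : BddBelow (mincap b '' ↑P') := by
    refine ⟨0, ?_⟩
    rintro x ⟨p, _, rfl⟩
    exact Real.sInf_nonneg fun y ⟨a, _, hy⟩ => hy ▸ hb a
  have hc0 : 0 ≤ c := by
    refine Real.sInf_nonneg ?_
    rintro x ⟨p, _, rfl⟩
    exact Real.sInf_nonneg fun y ⟨a, _, hy⟩ => hy ▸ hb a
  have hcle : ∀ p ∈ P', ∀ a ∈ arcs p, c ≤ b a := by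
    intro p hp a ha
    calc c ≤ mincap b p := csInf_le hbdd (Set.mem_image_of_mem _ hp)
    _ ≤ b a := csInf_le ⟨0, fun y ⟨a', _, hy⟩ => hy ▸ hb a'⟩ ⟨a, ha, rfl⟩
  refine ⟨P, fun i => hP' _ (hmemP i), ?_⟩
  apply le_csInf
  · obtain ⟨p, hp⟩ := hPne
    obtain ⟨a, ha⟩ := arcs_nonempty hst (hP' p hp)
    exact ⟨_, a, (hP' p hp).2.2.2 a ha, rfl⟩
  · rintro x ⟨abar, habarA, rfl⟩
    classical
    set S := P'.filter (fun p => abar ∉ arcs p) with hSdef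
    obtain ⟨f, hflow, hval⟩ := flow_exists hb hst S
      (fun p hp => hP' p (Finset.mem_of_mem_filter p hp))
      (fun p hp q hq => hdisj p (Finset.mem_of_mem_filter p hp) q (Finset.mem_of_mem_filter q hq))
      (inducedArcsFam P)
      (fun p hp => hcover p (Finset.mem_of_mem_filter p hp))
      abar (fun p hp => (Finset.mem_filter.mp hp).2)
      c hc0 (fun p hp => hcle p (Finset.mem_of_mem_filter p hp))
    have hmax : (S.card : ℝ) * c ≤ maxFlow ((inducedArcsFam P).erase abar) b s t := by
      apply le_csSup
      · exact ⟨∑ u, b (s, u), fun x hx => flowVal_le _ b hb s t x hx⟩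
      · exact ⟨f, hflow, hval⟩
    refine le_trans ?_ hmax
    have hT : (P'.filter (fun p => abar ∈ arcs p)).card ≤ 1 := by
      rw [Finset.card_le_one]
      intro p hp q hq
      by_contra hne
      exact hdisj p (Finset.mem_of_mem_filter p hp) q (Finset.mem_of_mem_filter q hq) hne abar
        (Finset.mem_filter.mp hp).2 (Finset.mem_filter.mp hq).2
    have hsplit : (P'.filter (fun p => abar ∈ arcs p)).card + S.card = P'.card :=
      Finset.card_filter_add_card_filter_not _
    have hScard : P'.card ≤ S.card + 1 := by omega
    have : (P'.card : ℝ) - 1 ≤ S.card := by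
      have := (Nat.cast_le (α := ℝ)).mpr hScard
      push_cast at this ⊢
      linarith
    exact mul_le_mul_of_nonneg_right this hc0
end

section
/- Let G be a directed graph with capacities, s ≠ t, and add an arc d=(s,t) with capacity F = maxflow(G). For any set P of paths in the augmented graph containing the single-arc path d together with a set Q of k paths in G, the minimum over single-arc failures ā of maxflow(induced(P) \ ā) equals min( maxflow(induced(Q)), min_{ā ∈ induced(Q)} [F + maxflow(induced(Q)\ā)] ), and in particular when the failure removes d, the residual max-flow equals maxflow(induced(Q)). -/
open Finset

variable {V : Type}

section Aux
variable [Fintype V]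

lemma zero_isFlow (E : Finset (V × V)) (b : V × V → ℝ) (hb : ∀ a, 0 ≤ b a) (s t : V) :
    IsFlow E b s t (fun _ => 0) :=
  ⟨fun _ => le_refl 0, fun _ _ => rfl, fun a _ => hb a, fun _ _ _ => rfl⟩

lemma flowValue_zero (s : V) : flowValue s (fun _ : V × V => 0) = 0 := by
  simp [flowValue]

lemma flowSet_nonempty (E : Finset (V × V)) (b : V × V → ℝ) (hb : ∀ a, 0 ≤ b a) (s t : V) :
    {x | ∃ f, IsFlow E b s t f ∧ flowValue s f = x}.Nonempty :=
  ⟨0, fun _ => 0, zero_isFlow E b hb s t, flowValue_zero s⟩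

lemma flowSet_bddAbove (E : Finset (V × V)) (b : V × V → ℝ) (hb : ∀ a, 0 ≤ b a) (s t : V) :
    BddAbove {x | ∃ f, IsFlow E b s t f ∧ flowValue s f = x} := by
  refine ⟨∑ u, b (s, u), ?_⟩
  rintro x ⟨f, hf, rfl⟩
  have h1 : ∀ u, f (s, u) ≤ b (s, u) := by
    intro u
    by_cases h : (s, u) ∈ E
    · exact hf.cap _ h
    · rw [hf.support _ h]; exact hb _
  have h2 : (0:ℝ) ≤ ∑ u, f (u, s) := Finset.sum_nonneg fun u _ => hf.nonneg _
  have h3 : (∑ u, f (s, u)) ≤ ∑ u, b (s, u) := Finset.sum_le_sum fun u _ => h1 u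
  unfold flowValue
  linarith

lemma maxFlow_nonneg (E : Finset (V × V)) (b : V × V → ℝ) (hb : ∀ a, 0 ≤ b a) (s t : V) :
    0 ≤ maxFlow E b s t :=
  le_csSup (flowSet_bddAbove E b hb s t)
    ⟨fun _ => 0, zero_isFlow E b hb s t, flowValue_zero s⟩

lemma maxFlow_congr (E : Finset (V × V)) (b b'' : V × V → ℝ) (h : ∀ a ∈ E, b a = b'' a)
    (s t : V) : maxFlow E b s t = maxFlow E b'' s t := by
  unfold maxFlow
  congr 1
  ext x
  constructor
  · rintro ⟨f, hf, rfl⟩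
    exact ⟨f, ⟨hf.nonneg, hf.support, fun a ha => (h a ha) ▸ hf.cap a ha, hf.conserve⟩, rfl⟩
  · rintro ⟨f, hf, rfl⟩
    exact ⟨f, ⟨hf.nonneg, hf.support, fun a ha => (h a ha) ▸ hf.cap a ha, hf.conserve⟩, rfl⟩

lemma maxFlow_empty (b : V × V → ℝ) (s t : V) : maxFlow (∅ : Finset (V × V)) b s t = 0 := by
  unfold maxFlow
  have hset : {x | ∃ f, IsFlow (∅ : Finset (V × V)) b s t f ∧ flowValue s f = x} = {0} := by
    ext x
    simp only [Set.mem_setOf_eq, Set.mem_singleton_iff]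
    constructor
    · rintro ⟨f, hf, rfl⟩
      have hz : ∀ a, f a = 0 := fun a => hf.support a (Finset.notMem_empty a)
      simp [flowValue, hz]
    · rintro rfl
      exact ⟨fun _ => 0,
        ⟨fun _ => le_refl 0, fun _ _ => rfl, fun a ha => absurd ha (Finset.notMem_empty a),
          fun _ _ _ => rfl⟩, flowValue_zero s⟩
  rw [hset, csSup_singleton]

lemma maxFlow_insert_arc [DecidableEq V] (S : Finset (V × V)) (b' : V × V → ℝ) (hb' : ∀ a, 0 ≤ b' a)
    (s t : V) (hst : s ≠ t) (hS : (s, t) ∉ S) :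
    maxFlow (insert (s, t) S) b' s t = b' (s, t) + maxFlow S b' s t := by
  have hbdd := flowSet_bddAbove S b' hb' s t
  have hbddBig := flowSet_bddAbove (insert (s, t) S) b' hb' s t
  apply le_antisymm
  · apply csSup_le (flowSet_nonempty _ b' hb' s t)
    rintro x ⟨f, hf, rfl⟩
    set g : V × V → ℝ := fun a => if a = (s, t) then 0 else f a with hg
    have hgflow : IsFlow S b' s t g := by
      refine ⟨?_, ?_, ?_, ?_⟩
      · intro a
        simp only [hg]
        split_ifs with h
        · exact le_refl 0
        · exact hf.nonneg a
      · intro a ha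
        simp only [hg]
        split_ifs with h
        · rfl
        · exact hf.support a (by simp [Finset.mem_insert, h, ha])
      · intro a ha
        have hne : a ≠ (s, t) := fun e => hS (e ▸ ha)
        simp only [hg, if_neg hne]
        exact hf.cap a (Finset.mem_insert_of_mem ha)
      · intro v hvs hvt
        have h1 : ∀ u, g (u, v) = f (u, v) := fun u =>
          if_neg (fun e => hvt (congrArg Prod.snd e))
        have h2 : ∀ u, g (v, u) = f (v, u) := fun u =>
          if_neg (fun e => hvs (congrArg Prod.fst e))
        simp only [h1, h2]
        exact hf.conserve v hvs hvt
    have e1 : (∑ u, g (s, u)) = (∑ u, f (s, u)) - f (s, t) := by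
      have hpt : ∀ u : V, g (s, u) = f (s, u) - (if u = t then f (s, t) else 0) := by
        intro u
        by_cases h : u = t
        · subst h; simp [hg]
        · simp [hg, Prod.ext_iff, h]
      rw [Finset.sum_congr rfl (fun u _ => hpt u), Finset.sum_sub_distrib]
      simp
    have e2 : (∑ u, g (u, s)) = ∑ u, f (u, s) := by
      apply Finset.sum_congr rfl
      intro u _
      exact if_neg (fun e => hst (congrArg Prod.snd e))
    have hval : flowValue s g = flowValue s f - f (s, t) := by
      unfold flowValue
      rw [e1, e2]; ring
    have hle : flowValue s g ≤ maxFlow S b' s t := le_csSup hbdd ⟨g, hgflow, rfl⟩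
    have hcap : f (s, t) ≤ b' (s, t) := hf.cap _ (Finset.mem_insert_self _ _)
    linarith
  · have key : ∀ x ∈ {x | ∃ f, IsFlow S b' s t f ∧ flowValue s f = x},
        x ≤ maxFlow (insert (s, t) S) b' s t - b' (s, t) := by
      rintro x ⟨g, hgf, rfl⟩
      set f : V × V → ℝ := fun a => if a = (s, t) then b' (s, t) else g a with hfdef
      have hg0 : g (s, t) = 0 := hgf.support _ hS
      have hfflow : IsFlow (insert (s, t) S) b' s t f := by
        refine ⟨?_, ?_, ?_, ?_⟩
        · intro a
          simp only [hfdef]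
          split_ifs with h
          · exact hb' _
          · exact hgf.nonneg a
        · intro a ha
          simp only [Finset.mem_insert, not_or] at ha
          simp only [hfdef, if_neg ha.1]
          exact hgf.support a ha.2
        · intro a ha
          simp only [hfdef]
          split_ifs with h
          · subst h; exact le_refl _
          · exact hgf.cap a ((Finset.mem_insert.mp ha).resolve_left h)
        · intro v hvs hvt
          have h1 : ∀ u, f (u, v) = g (u, v) := fun u =>
            if_neg (fun e => hvt (congrArg Prod.snd e))
          have h2 : ∀ u, f (v, u) = g (v, u) := fun u =>
            if_neg (fun e => hvs (congrArg Prod.fst e))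
          simp only [h1, h2]
          exact hgf.conserve v hvs hvt
      have e1 : (∑ u, f (s, u)) = (∑ u, g (s, u)) + b' (s, t) := by
        have hpt : ∀ u : V, f (s, u) = g (s, u) + (if u = t then b' (s, t) else 0) := by
          intro u
          by_cases h : u = t
          · subst h; simp [hfdef, hg0]
          · simp [hfdef, Prod.ext_iff, h]
        rw [Finset.sum_congr rfl (fun u _ => hpt u), Finset.sum_add_distrib]
        simp
      have e2 : (∑ u, f (u, s)) = ∑ u, g (u, s) := by
        apply Finset.sum_congr rfl
        intro u _
        exact if_neg (fun e => hst (congrArg Prod.snd e))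
      have hval : flowValue s f = flowValue s g + b' (s, t) := by
        unfold flowValue
        rw [e1, e2]; ring
      have hmem : flowValue s f ≤ maxFlow (insert (s, t) S) b' s t :=
        le_csSup hbddBig ⟨f, hfflow, rfl⟩
      linarith
    have := csSup_le (flowSet_nonempty S b' hb' s t) key
    have hmf : maxFlow S b' s t ≤ maxFlow (insert (s, t) S) b' s t - b' (s, t) := this
    linarith

end Aux

section Main
variable [Fintype V] [DecidableEq V]

lemma mem_inducedArcsFam {k : ℕ} (Q : Fin k → List V) (a : V × V) :
    a ∈ inducedArcsFam Q ↔ ∃ i, a ∈ arcs (Q i) := by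
  simp [inducedArcsFam, List.mem_toFinset]


end Main

/-- with the dummy arc `d = (s,t)` of capacity `F = maxflow(G)`
added to the paths `Q`, the worst residual max-flow over single-arc failures of
the induced subgraph equals
`min (maxflow(induced Q)) (min_{ā ∈ induced Q} (F + maxflow(induced Q ∖ ā)))`,
and the failure of `d` leaves exactly `maxflow(induced Q)`. -/
theorem stmt9 [Fintype V] [DecidableEq V] (A : Finset (V × V)) (b : V × V → ℝ)
    (hb : ∀ a, 0 ≤ b a) (s t : V) (hst : s ≠ t) (hd : (s, t) ∉ A) (k : ℕ)
    (b' : V × V → ℝ) (hb'd : b' (s, t) = maxFlow A b s t)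
    (hb'a : ∀ a ≠ (s, t), b' a = b a)
    (Q : Fin k → List V) (hQ : ∀ i, IsPath A s t (Q i)) :
    worstFlow (insert (s, t) (inducedArcsFam Q))
        (insert (s, t) (inducedArcsFam Q)) b' s t =
      min (maxFlow (inducedArcsFam Q) b s t)
        (sInf {x | ∃ a ∈ inducedArcsFam Q,
          maxFlow A b s t + maxFlow ((inducedArcsFam Q).erase a) b s t = x}) ∧
    maxFlow ((insert (s, t) (inducedArcsFam Q)).erase (s, t)) b' s t =
      maxFlow (inducedArcsFam Q) b s t := by
  set S := inducedArcsFam Q with hSdef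
  have hSst : (s, t) ∉ S := by
    rw [hSdef, mem_inducedArcsFam]
    rintro ⟨i, hi⟩
    exact hd ((hQ i).2.2.2 _ hi)
  have hb' : ∀ a, 0 ≤ b' a := by
    intro a
    by_cases h : a = (s, t)
    · rw [h, hb'd]; exact maxFlow_nonneg A b hb s t
    · rw [hb'a a h]; exact hb a
  have hSb' : ∀ (T : Finset (V × V)), (s, t) ∉ T → maxFlow T b' s t = maxFlow T b s t :=
    fun T hT => maxFlow_congr T b' b (fun a ha => hb'a a (fun e => hT (e ▸ ha))) s t
  have herase : (insert (s, t) S).erase (s, t) = S := Finset.erase_insert hSst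
  have part2 : maxFlow ((insert (s, t) S).erase (s, t)) b' s t = maxFlow S b s t := by
    rw [herase]; exact hSb' S hSst
  refine ⟨?_, part2⟩
  have key : ∀ a ∈ S, maxFlow ((insert (s, t) S).erase a) b' s t =
      maxFlow A b s t + maxFlow (S.erase a) b s t := by
    intro a ha
    have hne : (s, t) ≠ a := fun e => hSst (e ▸ ha)
    rw [Finset.erase_insert_of_ne hne,
      maxFlow_insert_arc (S.erase a) b' hb' s t hst (fun h => hSst (Finset.mem_of_mem_erase h)),
      hb'd, hSb' (S.erase a) (fun h => hSst (Finset.mem_of_mem_erase h))]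
  have hset : {x | ∃ a ∈ insert (s, t) S, maxFlow ((insert (s, t) S).erase a) b' s t = x}
      = insert (maxFlow S b s t)
        {x | ∃ a ∈ S, maxFlow A b s t + maxFlow (S.erase a) b s t = x} := by
    ext x
    simp only [Set.mem_setOf_eq, Set.mem_insert_iff, Finset.mem_insert]
    constructor
    · rintro ⟨a, (rfl | ha), rfl⟩
      · left; exact part2
      · right; exact ⟨a, ha, (key a ha).symm⟩
    · rintro (rfl | ⟨a, ha, rfl⟩)
      · exact ⟨(s, t), Or.inl rfl, part2⟩
      · exact ⟨a, Or.inr ha, key a ha⟩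
  unfold worstFlow
  rw [hset]
  by_cases hS : S = ∅
  · rw [hS]
    have hT : {x | ∃ a ∈ (∅ : Finset (V × V)), maxFlow A b s t +
        maxFlow (Finset.erase ∅ a) b s t = x} = (∅ : Set ℝ) := by
      ext x; simp
    rw [hT, insert_empty_eq, csInf_singleton, Real.sInf_empty, maxFlow_empty]
    simp
  · obtain ⟨a₀, ha₀⟩ := Finset.nonempty_iff_ne_empty.mpr hS
    have hTne : {x | ∃ a ∈ S, maxFlow A b s t + maxFlow (S.erase a) b s t = x}.Nonempty :=
      ⟨_, a₀, ha₀, rfl⟩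
    have hTbdd : BddBelow {x | ∃ a ∈ S, maxFlow A b s t + maxFlow (S.erase a) b s t = x} := by
      refine ⟨0, ?_⟩
      rintro x ⟨a, ha, rfl⟩
      have := maxFlow_nonneg A b hb s t
      have := maxFlow_nonneg (S.erase a) b hb s t
      linarith
    rw [csInf_insert hTbdd hTne]
end

section
/- Let m(G) denote the maximum number of pairwise arc-disjoint s-t paths in G and let G' be obtained from G by deleting a set of arcs. Then m(G') ≤ m(G). Consequently, in Algorithm RAPCP the number of disjoint paths found is non-increasing across iterations, and the algorithm returns a family attaining the global optimum of the lexicographic objective (max cardinality, then max bottleneck): the last recorded family P with |P| = m(G) has the maximum possible value of min_{p∈P} mincap(p) among all families of m(G) pairwise arc-disjoint s-t paths in G. -/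
open Finset

variable {V : Type}

/-- (i) deleting arcs cannot increase the maximum number `m` of
pairwise arc-disjoint `s`-`t` paths; (ii) correctness of Algorithm RAPCP: if
`P` is a family of `m` arc-disjoint paths such that after deleting all arcs of
capacity ≤ its bottleneck no family of `m` arc-disjoint paths survives, then
`P` attains the maximum bottleneck among all families of `m` arc-disjoint
paths. -/
theorem stmt17 [DecidableEq V] (A : Finset (V × V)) (b : V × V → ℝ)
    (s t : V) (hst : s ≠ t) (m : ℕ)
    (hm1 : ∃ P : Finset (List V),
      (∀ p ∈ P, IsPath A s t p) ∧ ArcDisjoint P ∧ P.card = m)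
    (hm2 : ∀ P : Finset (List V),
      (∀ p ∈ P, IsPath A s t p) → ArcDisjoint P → P.card ≤ m) :
    (∀ A' : Finset (V × V), A' ⊆ A → ∀ Q : Finset (List V),
      (∀ q ∈ Q, IsPath A' s t q) → ArcDisjoint Q → Q.card ≤ m) ∧
    (∀ P : Finset (List V), (∀ p ∈ P, IsPath A s t p) → ArcDisjoint P →
      P.card = m →
      (∀ Q : Finset (List V),
        (∀ q ∈ Q, IsPath (A.filter fun a => sInf (mincap b '' ↑P) < b a) s t q) →
        ArcDisjoint Q → Q.card < m) →
      ∀ Q : Finset (List V), (∀ q ∈ Q, IsPath A s t q) → ArcDisjoint Q →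
        Q.card = m → sInf (mincap b '' ↑Q) ≤ sInf (mincap b '' ↑P)) := by
  constructor
  · intro A' hA' Q hQ hD
    apply hm2 Q _ hD
    intro q hq
    obtain ⟨h1, h2, h3, h4⟩ := hQ q hq
    exact ⟨h1, h2, h3, fun a ha => hA' (h4 a ha)⟩
  · intro P hP hDP hcard hsurv Q hQ hDQ hQcard
    by_contra h
    push_neg at h
    have hlt : Q.card < m := by
      apply hsurv Q _ hDQ
      intro q hq
      obtain ⟨h1, h2, h3, h4⟩ := hQ q hq
      refine ⟨h1, h2, h3, fun a ha => ?_⟩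
      rw [Finset.mem_filter]
      refine ⟨h4 a ha, ?_⟩
      calc sInf (mincap b '' ↑P) < sInf (mincap b '' ↑Q) := h
        _ ≤ mincap b q := csInf_le ((Q.finite_toSet.image (mincap b)).bddBelow)
            ⟨q, hq, rfl⟩
        _ ≤ b a := csInf_le (((arcs q).finite_toSet.image b).bddBelow) ⟨a, ha, rfl⟩
    omega
end
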